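/- Let d be a locally compact length metric on X and ρ: I×X → (0,∞) locally Lipschitz. Then the family F = {d_{ρ(s,·)} : s ∈ I} of conformally weighted length metrics satisfies the local log-Lipschitz condition (L): for every compact J ⊆ I and K ⊆ X there exist C, r > 0 such that |log(d_{ρ(s,·)}(x,y)/d_{ρ(s',·)}(x,y))| ≤ C|s − s'| for all s,s' ∈ J and x,y ∈ K with inf_{s∈J} d_{ρ(s,·)}(x,y) < r. -/

import Mathlib

open Filter MeasureTheory Set Topology
open scoped ENNReal NNReal

noncomputable section

/-- The metric speed of a curve `β` at time `t` w.r.t. a distance function `dist`. -/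
def mSpeed {X : Type*} (dst : X → X → ℝ) (β : ℝ → X) (t : ℝ) : ℝ :=
  Filter.limsup (fun e : ℝ => dst (β (t + e)) (β t) / |e|) (nhdsWithin (0 : ℝ) {0}ᶜ)

/-- The generalized metric speed `v_β(s,t)` of a curve `β` w.r.t. the family of
metrics `d`. -/
def genSpeed {X : Type*} (d : ℝ → X → X → ℝ) (β : ℝ → X) (s t : ℝ) : ℝ :=
  Filter.limsup (fun e : ℝ => (∫ u in t..(t + e), mSpeed (d s) β u) / e)
    (nhdsWithin (0 : ℝ) {0}ᶜ)

/-- Absolute continuity of a curve on `[a,b]` w.r.t. a distance function. -/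
def ACOn {X : Type*} (dst : X → X → ℝ) (β : ℝ → X) (a b : ℝ) : Prop :=
  ∃ g : ℝ → ℝ, MeasureTheory.IntegrableOn g (Set.Icc a b) ∧
    ∀ ⦃t u : ℝ⦄, t ∈ Set.Icc a b → u ∈ Set.Icc a b → t ≤ u →
      dst (β t) (β u) ≤ ∫ r in t..u, g r

/-- The standard distance on `ℝ`. -/
def rdist : ℝ → ℝ → ℝ := fun x y => |x - y|

/-- `d` is a family of metrics on `X` indexed by `s ∈ I`, each generating the
topology of `X`. -/
def IsMetricFamily {X : Type*} [TopologicalSpace X] (I : Set ℝ) (d : ℝ → X → X → ℝ) : Prop :=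
  ∀ s ∈ I,
    (∀ x : X, d s x x = 0) ∧ (∀ x y : X, x ≠ y → 0 < d s x y) ∧
    (∀ x y : X, d s x y = d s y x) ∧ (∀ x y z : X, d s x z ≤ d s x y + d s y z) ∧
    (∀ x : X, (nhds x).HasBasis (fun ε : ℝ => 0 < ε) (fun ε => {y | d s x y < ε}))

/-- Condition (C): local uniform continuity of `s ↦ d_s` in a logarithmic sense. -/
def CondC {X : Type*} [TopologicalSpace X] (I : Set ℝ) (d : ℝ → X → X → ℝ) : Prop :=
  ∀ J : Set ℝ, ∀ K : Set X, J ⊆ I → IsCompact J → IsCompact K →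
    ∃ r > (0 : ℝ), ∃ ω : ℝ → ℝ, ω 0 = 0 ∧ Monotone ω ∧ ContinuousAt ω 0 ∧
      ∀ s ∈ J, ∀ s' ∈ J, ∀ x ∈ K, ∀ y ∈ K, x ≠ y →
        sInf ((fun u => d u x y) '' J) < r →
        |Real.log (d s x y / d s' x y)| ≤ ω |s - s'|

/-- Condition (L): local log-Lipschitz dependence of `d_s` on `s`. -/
def CondL {X : Type*} [TopologicalSpace X] (I : Set ℝ) (d : ℝ → X → X → ℝ) : Prop :=
  ∀ J : Set ℝ, ∀ K : Set X, J ⊆ I → IsCompact J → IsCompact K →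
    ∃ C > (0 : ℝ), ∃ r > (0 : ℝ),
      ∀ s ∈ J, ∀ s' ∈ J, ∀ x ∈ K, ∀ y ∈ K, x ≠ y →
        sInf ((fun u => d u x y) '' J) < r →
        |Real.log (d s x y / d s' x y)| ≤ C * |s - s'|

/-- Condition (H): Lipschitz continuity of `h` in the time variable, locally
uniformly. -/
def CondH {X : Type*} [TopologicalSpace X] (I : Set ℝ) (h : ℝ → X → ℝ) : Prop :=
  ∀ J : Set ℝ, ∀ K : Set X, J ⊆ I → IsCompact J → IsCompact K →
    ∃ C' > (0 : ℝ), ∀ s ∈ J, ∀ s' ∈ J, ∀ x ∈ K, |h s x - h s' x| ≤ C' * |s - s'|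

/-- A curve `(α, β) : [a,b] → I × X` with both components absolutely continuous. -/
def CurveIn {X : Type*} (I : Set ℝ) (d : ℝ → X → X → ℝ) (α : ℝ → ℝ) (β : ℝ → X)
    (a b : ℝ) : Prop :=
  a < b ∧ ACOn rdist α a b ∧ (∀ s ∈ I, ACOn (d s) β a b) ∧ ∀ t ∈ Set.Icc a b, α t ∈ I

/-- Future directed: `α' > 0` a.e. -/
def FutureDirected (α : ℝ → ℝ) (a b : ℝ) : Prop :=
  ∀ᵐ t : ℝ, t ∈ Set.Ioo a b → 0 < deriv α t

/-- Past directed: `α' < 0` a.e. -/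
def PastDirected (α : ℝ → ℝ) (a b : ℝ) : Prop :=
  ∀ᵐ t : ℝ, t ∈ Set.Ioo a b → deriv α t < 0

/-- The causality inequality `v_β(α_t,t)² ≤ h(γ_t)² α'(t)²` a.e. -/
def CausalIneq {X : Type*} (d : ℝ → X → X → ℝ) (h : ℝ → X → ℝ) (α : ℝ → ℝ)
    (β : ℝ → X) (a b : ℝ) : Prop :=
  ∀ᵐ t : ℝ, t ∈ Set.Ioo a b →
    (genSpeed d β (α t) t) ^ 2 ≤ (h (α t) (β t)) ^ 2 * (deriv α t) ^ 2

/-- The timelike inequality `v_β(α_t,t)² < h(γ_t)² α'(t)²` a.e. -/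
def TimelikeIneq {X : Type*} (d : ℝ → X → X → ℝ) (h : ℝ → X → ℝ) (α : ℝ → ℝ)
    (β : ℝ → X) (a b : ℝ) : Prop :=
  ∀ᵐ t : ℝ, t ∈ Set.Ioo a b →
    (genSpeed d β (α t) t) ^ 2 < (h (α t) (β t)) ^ 2 * (deriv α t) ^ 2

/-- Future directed causal curve. -/
def FutureCausal {X : Type*} (I : Set ℝ) (d : ℝ → X → X → ℝ) (h : ℝ → X → ℝ)
    (α : ℝ → ℝ) (β : ℝ → X) (a b : ℝ) : Prop :=
  CurveIn I d α β a b ∧ FutureDirected α a b ∧ CausalIneq d h α β a b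

/-- Future directed timelike curve. -/
def FutureTimelike {X : Type*} (I : Set ℝ) (d : ℝ → X → X → ℝ) (h : ℝ → X → ℝ)
    (α : ℝ → ℝ) (β : ℝ → X) (a b : ℝ) : Prop :=
  CurveIn I d α β a b ∧ FutureDirected α a b ∧ TimelikeIneq d h α β a b

/-- Causal curve (future or past directed). -/
def CausalCurve {X : Type*} (I : Set ℝ) (d : ℝ → X → X → ℝ) (h : ℝ → X → ℝ)
    (α : ℝ → ℝ) (β : ℝ → X) (a b : ℝ) : Prop :=
  CurveIn I d α β a b ∧ (FutureDirected α a b ∨ PastDirected α a b) ∧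
    CausalIneq d h α β a b

/-- The causal relation `p ≤ q` in the generalized Lorentzian product. -/
def causalRel {X : Type*} (I : Set ℝ) (d : ℝ → X → X → ℝ) (h : ℝ → X → ℝ)
    (p q : ℝ × X) : Prop :=
  ∃ a b α β, FutureCausal I d h α β a b ∧
    α a = p.1 ∧ β a = p.2 ∧ α b = q.1 ∧ β b = q.2

/-- The chronological relation `p ≪ q` in the generalized Lorentzian product. -/
def chronRel {X : Type*} (I : Set ℝ) (d : ℝ → X → X → ℝ) (h : ℝ → X → ℝ)
    (p q : ℝ × X) : Prop :=
  ∃ a b α β, FutureTimelike I d h α β a b ∧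
    α a = p.1 ∧ β a = p.2 ∧ α b = q.1 ∧ β b = q.2

/-- The Lorentzian length of a curve. -/
def lorLen {X : Type*} (d : ℝ → X → X → ℝ) (h : ℝ → X → ℝ) (α : ℝ → ℝ) (β : ℝ → X)
    (a b : ℝ) : ℝ :=
  ∫ t in a..b,
    Real.sqrt ((h (α t) (β t)) ^ 2 * (deriv α t) ^ 2 - (genSpeed d β (α t) t) ^ 2)

/-- The time separation function `τ` of the generalized Lorentzian product. -/
def timeSep {X : Type*} (I : Set ℝ) (d : ℝ → X → X → ℝ) (h : ℝ → X → ℝ)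
    (p q : ℝ × X) : ℝ≥0∞ :=
  sSup {l | ∃ a b α β, FutureCausal I d h α β a b ∧
    α a = p.1 ∧ β a = p.2 ∧ α b = q.1 ∧ β b = q.2 ∧
    l = ENNReal.ofReal (lorLen d h α β a b)}

end

noncomputable section

open Filter MeasureTheory Set Topology
open scoped ENNReal Pointwise

/-- The length of a curve `β : [0,1] → X` weighted by the conformal factor `g`. -/
def confLen {X : Type*} [MetricSpace X] (g : X → ℝ) (β : ℝ → X) : ℝ :=
  ∫ t in (0 : ℝ)..1, g (β t) * mSpeed (fun a b : X => dist a b) β t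

/-- The conformally weighted length metric `d_g`. -/
def confMetric {X : Type*} [MetricSpace X] (g : X → ℝ) (x y : X) : ℝ :=
  sInf {l | ∃ β : ℝ → X, ACOn (fun a b : X => dist a b) β 0 1 ∧
    β 0 = x ∧ β 1 = y ∧ l = confLen g β}

/-- `X` is a length space: the distance is the infimum of lengths of absolutely
continuous curves. -/
def IsLengthMetric (X : Type*) [MetricSpace X] : Prop :=
  ∀ x y : X, dist x y = confMetric (fun _ => (1 : ℝ)) x y

/-- Local Lipschitz continuity of a function on `I × X`. -/
def LocLipOn {X : Type*} [MetricSpace X] (I : Set ℝ) (f : ℝ → X → ℝ) : Prop :=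
  ∀ J : Set ℝ, ∀ K : Set X, J ⊆ I → IsCompact J → IsCompact K →
    ∃ C : ℝ, ∀ s ∈ J, ∀ s' ∈ J, ∀ x ∈ K, ∀ y ∈ K,
      |f s x - f s' y| ≤ C * (|s - s'| + dist x y)


section CondLHelpers

variable {X : Type*} [MetricSpace X]

lemma helper_mSpeed_nonneg (β : ℝ → X) (t : ℝ) :
    0 ≤ mSpeed (fun a b : X => dist a b) β t := by
  rw [mSpeed, Filter.limsup_eq]
  refine Real.sInf_nonneg fun a ha => ?_
  have ha' : ∀ᶠ n in nhdsWithin (0:ℝ) {0}ᶜ, dist (β (t + n)) (β t) / |n| ≤ a := ha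
  obtain ⟨e, he⟩ := ha'.exists
  exact le_trans (div_nonneg dist_nonneg (abs_nonneg e)) he

lemma helper_limsup_const_mul {f : Filter ℝ} {F : ℝ → ℝ} {c : ℝ} (hc : 0 < c) :
    Filter.limsup (fun e => c * F e) f = c * Filter.limsup F f := by
  rw [Filter.limsup_eq, Filter.limsup_eq]
  have hset : {a | ∀ᶠ e in f, c * F e ≤ a} = c • ({a | ∀ᶠ e in f, F e ≤ a} : Set ℝ) := by
    ext a
    simp only [Set.mem_smul_set, Set.mem_setOf_eq, smul_eq_mul]
    constructor
    · intro h
      refine ⟨a / c, ?_, by field_simp⟩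
      filter_upwards [h] with e he
      rw [le_div_iff₀ hc]
      linarith
    · rintro ⟨b, hb, rfl⟩
      filter_upwards [hb] with e he
      exact mul_le_mul_of_nonneg_left he hc.le
  rw [hset, Real.sInf_smul_of_nonneg hc.le, smul_eq_mul]

lemma helper_mSpeed_comp_mul {Y : Type*} (dst : Y → Y → ℝ) (β : ℝ → Y) {c : ℝ} (hc : 0 < c)
    (t : ℝ) :
    mSpeed dst (fun u => β (c * u)) t = c * mSpeed dst β (c * t) := by
  have hmap : Filter.map (fun e : ℝ => c * e) (nhdsWithin (0 : ℝ) {0}ᶜ)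
      = nhdsWithin (0 : ℝ) {0}ᶜ := by
    have h := (Homeomorph.mulLeft₀ c hc.ne').map_punctured_nhds_eq 0
    simpa using h
  have hfun : (fun e : ℝ => dst ((fun u => β (c * u)) (t + e)) ((fun u => β (c * u)) t) / |e|)
      = (fun e : ℝ => c * (dst (β (c * t + e)) (β (c * t)) / |e|)) ∘ (fun e : ℝ => c * e) := by
    funext e
    simp only [Function.comp_apply]
    rw [mul_add]
    rcases eq_or_ne e 0 with rfl | he
    · simp
    · have h1 : |e| ≠ 0 := abs_ne_zero.mpr he
      rw [abs_mul, abs_of_pos hc]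
      field_simp
  have hcomp : Filter.limsup ((fun e : ℝ => c * (dst (β (c * t + e)) (β (c * t)) / |e|)) ∘
      (fun e : ℝ => c * e)) (nhdsWithin (0 : ℝ) {0}ᶜ)
      = Filter.limsup (fun e : ℝ => c * (dst (β (c * t + e)) (β (c * t)) / |e|))
        (Filter.map (fun e : ℝ => c * e) (nhdsWithin (0 : ℝ) {0}ᶜ)) := rfl
  rw [mSpeed, hfun, hcomp, hmap, helper_limsup_const_mul hc, mSpeed]

lemma helper_confLen_nonneg {g : X → ℝ} (hg : ∀ z, 0 ≤ g z) (β : ℝ → X) : 0 ≤ confLen g β :=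
  intervalIntegral.integral_nonneg zero_le_one fun u _ =>
    mul_nonneg (hg _) (helper_mSpeed_nonneg β u)

lemma helper_confMetric_bddBelow {g : X → ℝ} (hg : ∀ z, 0 ≤ g z) (x y : X) :
    BddBelow {l | ∃ β : ℝ → X, ACOn (fun a b : X => dist a b) β 0 1 ∧
      β 0 = x ∧ β 1 = y ∧ l = confLen g β} :=
  ⟨0, fun _ ⟨β, _, _, _, hl⟩ => hl ▸ helper_confLen_nonneg hg β⟩

lemma helper_confMetric_nonneg {g : X → ℝ} (hg : ∀ z, 0 ≤ g z) (x y : X) :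
    0 ≤ confMetric g x y :=
  Real.sInf_nonneg fun _ ⟨β, _, _, _, hl⟩ => hl ▸ helper_confLen_nonneg hg β

lemma helper_confMetric_le_confLen {g : X → ℝ} (hg : ∀ z, 0 ≤ g z) {β : ℝ → X} {x y : X}
    (hAC : ACOn (fun a b : X => dist a b) β 0 1) (h0 : β 0 = x) (h1 : β 1 = y) :
    confMetric g x y ≤ confLen g β :=
  csInf_le (helper_confMetric_bddBelow hg x y) ⟨β, hAC, h0, h1, rfl⟩

lemma helper_exists_lt {g : X → ℝ} {x y : X} {b : ℝ}
    (hne : ∃ β : ℝ → X, ACOn (fun a b : X => dist a b) β 0 1 ∧ β 0 = x ∧ β 1 = y)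
    (h : confMetric g x y < b) :
    ∃ β : ℝ → X, ACOn (fun a b : X => dist a b) β 0 1 ∧ β 0 = x ∧ β 1 = y ∧
      confLen g β < b := by
  obtain ⟨β₀, h1, h2, h3⟩ := hne
  have h' : sInf {l | ∃ β : ℝ → X, ACOn (fun a b : X => dist a b) β 0 1 ∧
      β 0 = x ∧ β 1 = y ∧ l = confLen g β} < b := h
  have hne2 : Set.Nonempty {l | ∃ β : ℝ → X, ACOn (fun a b : X => dist a b) β 0 1 ∧
      β 0 = x ∧ β 1 = y ∧ l = confLen g β} := ⟨confLen g β₀, β₀, h1, h2, h3, rfl⟩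
  obtain ⟨l, hl, hlb⟩ := exists_lt_of_csInf_lt hne2 h'
  obtain ⟨β, hb1, hb2, hb3, rfl⟩ := hl
  exact ⟨β, hb1, hb2, hb3, hlb⟩

lemma helper_acOn_continuousOn {β : ℝ → X} (h : ACOn (fun a b : X => dist a b) β 0 1) :
    ContinuousOn β (Icc 0 1) := by
  obtain ⟨g, hg, hbd⟩ := h
  set G : ℝ → ℝ := fun r => |g r| with hGdef
  have hgabs : IntegrableOn G (Icc (0:ℝ) 1) := hg.abs
  set H : ℝ → ℝ := fun u => ∫ r in (0:ℝ)..u, G r with hHdef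
  have hH : ContinuousOn H (Icc (0:ℝ) 1) := by
    have h2 := intervalIntegral.continuousOn_primitive_interval (a := 0) (b := 1)
      (f := G) (μ := volume) (by rwa [uIcc_of_le zero_le_one])
    rwa [uIcc_of_le zero_le_one] at h2
  intro t₀ ht₀
  rw [ContinuousWithinAt, tendsto_iff_dist_tendsto_zero]
  have key : ∀ t ∈ Icc (0:ℝ) 1, dist (β t) (β t₀) ≤ |H t - H t₀| := by
    intro t ht
    have habs : ∀ u v : ℝ, u ∈ Icc (0:ℝ) 1 → v ∈ Icc (0:ℝ) 1 → u ≤ v →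
        dist (β u) (β v) ≤ H v - H u := by
      intro u v hu hv huv
      have hgi : IntervalIntegrable g volume u v := by
        have h3 : IntegrableOn g (uIcc u v) := by
          rw [uIcc_of_le huv]; exact hg.mono_set (Icc_subset_Icc hu.1 hv.2)
        exact h3.intervalIntegrable
      have hgi' : IntervalIntegrable G volume u v := hgi.abs
      have hai : IntervalIntegrable G volume 0 v := by
        have h3 : IntegrableOn G (uIcc 0 v) := by
          rw [uIcc_of_le hv.1]; exact hgabs.mono_set (Icc_subset_Icc le_rfl hv.2)
        exact h3.intervalIntegrable
      have hau : IntervalIntegrable G volume 0 u := by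
        have h3 : IntegrableOn G (uIcc 0 u) := by
          rw [uIcc_of_le hu.1]; exact hgabs.mono_set (Icc_subset_Icc le_rfl hu.2)
        exact h3.intervalIntegrable
      calc dist (β u) (β v) ≤ ∫ r in u..v, g r := hbd hu hv huv
        _ ≤ ∫ r in u..v, G r :=
            intervalIntegral.integral_mono_on huv hgi hgi' fun x _ => le_abs_self _
        _ = H v - H u := (intervalIntegral.integral_interval_sub_left hai hau).symm
    rcases le_total t t₀ with h' | h'
    · calc dist (β t) (β t₀) ≤ H t₀ - H t := habs t t₀ ht ht₀ h'
        _ ≤ |H t - H t₀| := by rw [abs_sub_comm]; exact le_abs_self _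
    · calc dist (β t) (β t₀) = dist (β t₀) (β t) := dist_comm _ _
        _ ≤ H t - H t₀ := habs t₀ t ht₀ ht h'
        _ ≤ |H t - H t₀| := le_abs_self _
  have h1 : Tendsto (fun t => |H t - H t₀|) (nhdsWithin t₀ (Icc 0 1)) (nhds 0) := by
    have h2 : Tendsto (fun t => H t - H t₀) (nhdsWithin t₀ (Icc 0 1)) (nhds 0) := by
      have h3 : Tendsto (fun t => H t - H t₀) (nhdsWithin t₀ (Icc (0:ℝ) 1))
          (nhds (H t₀ - H t₀)) := Tendsto.sub (hH t₀ ht₀)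
        (tendsto_const_nhds (x := H t₀) (f := nhdsWithin t₀ (Icc (0:ℝ) 1)))
      rwa [sub_self] at h3
    have h4 := h2.abs
    simpa using h4
  exact squeeze_zero' (Filter.eventually_of_mem self_mem_nhdsWithin fun t _ => dist_nonneg)
    (Filter.eventually_of_mem self_mem_nhdsWithin fun t ht => key t ht) h1

lemma helper_acOn_comp_mul {β : ℝ → X} (h : ACOn (fun a b : X => dist a b) β 0 1)
    {c : ℝ} (hc : 0 < c) (hc1 : c ≤ 1) :
    ACOn (fun a b : X => dist a b) (fun u => β (c * u)) 0 1 := by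
  obtain ⟨g, hg, hbd⟩ := h
  refine ⟨fun t => c * g (c * t), ?_, ?_⟩
  · have h1 : IntervalIntegrable g volume 0 c := by
      have : IntegrableOn g (uIcc 0 c) := by
        rw [uIcc_of_le hc.le]; exact hg.mono_set (Icc_subset_Icc le_rfl hc1)
      exact this.intervalIntegrable
    have h2 : IntervalIntegrable (fun t => g (c * t)) volume 0 1 := by
      have h3 := h1.comp_mul_left (c := c)
      rwa [zero_div, div_self hc.ne'] at h3
    have h3 : IntervalIntegrable (fun t => c * g (c * t)) volume 0 1 := h2.const_mul c
    rw [integrableOn_Icc_iff_integrableOn_Ioc]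
    exact h3.1
  · intro t u ht hu htu
    have hct : c * t ∈ Icc (0:ℝ) 1 :=
      ⟨mul_nonneg hc.le ht.1, le_trans (by nlinarith [ht.2] : c * t ≤ c) hc1⟩
    have hcu : c * u ∈ Icc (0:ℝ) 1 :=
      ⟨mul_nonneg hc.le hu.1, le_trans (by nlinarith [hu.2] : c * u ≤ c) hc1⟩
    have key := hbd hct hcu (by nlinarith)
    calc dist (β (c * t)) (β (c * u)) ≤ ∫ r in (c * t)..(c * u), g r := key
      _ = ∫ r in t..u, c * g (c * r) := by
          rw [intervalIntegral.integral_const_mul, intervalIntegral.integral_comp_mul_left g hc.ne',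
            smul_eq_mul, ← mul_assoc, mul_inv_cancel₀ hc.ne', one_mul]

lemma helper_dist_le_integral_mSpeed (hlen : IsLengthMetric X) {β : ℝ → X}
    (hAC : ACOn (fun a b : X => dist a b) β 0 1) {c : ℝ} (hc : 0 < c) (hc1 : c ≤ 1) :
    dist (β 0) (β c) ≤ ∫ t in (0:ℝ)..c, mSpeed (fun a b : X => dist a b) β t := by
  have hAC' := helper_acOn_comp_mul hAC hc hc1
  have h2 : confMetric (fun _ : X => (1:ℝ)) (β 0) (β c)
      ≤ confLen (fun _ : X => (1:ℝ)) (fun u => β (c * u)) :=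
    helper_confMetric_le_confLen (fun _ => zero_le_one) hAC' (by norm_num) (by norm_num)
  have h3 : confLen (fun _ : X => (1:ℝ)) (fun u => β (c * u))
      = ∫ t in (0:ℝ)..c, mSpeed (fun a b : X => dist a b) β t := by
    show (∫ t in (0:ℝ)..1, (fun _ : X => (1:ℝ)) ((fun u => β (c * u)) t) *
        mSpeed (fun a b : X => dist a b) (fun u => β (c * u)) t) = _
    rw [intervalIntegral.integral_congr
      (g := fun t => c * mSpeed (fun a b : X => dist a b) β (c * t))
      (fun t _ => by
        simp only [one_mul]
        exact helper_mSpeed_comp_mul (fun a b : X => dist a b) β hc t)]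
    rw [intervalIntegral.integral_const_mul,
      intervalIntegral.integral_comp_mul_left
        (fun u => mSpeed (fun a b : X => dist a b) β u) hc.ne',
      smul_eq_mul, ← mul_assoc, mul_inv_cancel₀ hc.ne', one_mul, mul_zero, mul_one]
  rw [hlen (β 0) (β c), ← h3]
  exact h2

lemma helper_mem_cthickening_iff {K : Set X} (hK : K.Nonempty) {δ : ℝ} (hδ : 0 ≤ δ) (z : X) :
    z ∈ Metric.cthickening δ K ↔ Metric.infDist z K ≤ δ := by
  rw [Metric.mem_cthickening_iff]
  constructor
  · intro h
    have h2 := ENNReal.toReal_mono ENNReal.ofReal_ne_top h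
    rwa [ENNReal.toReal_ofReal hδ] at h2
  · intro h
    rw [← ENNReal.ofReal_toReal (Metric.infEdist_ne_top hK)]
    exact ENNReal.ofReal_le_ofReal h

lemma helper_integrableOn_mul_of_bdd {w f h : ℝ → ℝ} (hw : ContinuousOn w (Icc 0 1))
    (hf : IntegrableOn f (Ioc 0 1))
    (hh : ∀ t ∈ Ioc (0:ℝ) 1, h t = w t * f t) :
    IntegrableOn h (Ioc 0 1) := by
  set proj : ℝ → ℝ := fun t => min (max t 0) 1 with hprojdef
  have hproj_mem : ∀ t, proj t ∈ Icc (0:ℝ) 1 := fun t =>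
    ⟨le_min (le_max_right t 0) zero_le_one, min_le_right _ _⟩
  have hproj_id : ∀ t ∈ Icc (0:ℝ) 1, proj t = t := fun t ht => by
    simp only [hprojdef]
    rw [max_eq_left ht.1, min_eq_left ht.2]
  have hw'c : Continuous (fun t => w (proj t)) :=
    hw.comp_continuous (by fun_prop) hproj_mem
  obtain ⟨Cb, hCb⟩ := isCompact_Icc.exists_bound_of_continuousOn hw
  have hbd : ∀ t, ‖w (proj t)‖ ≤ Cb := fun t => hCb _ (hproj_mem t)
  have hint : Integrable (fun t => w (proj t) * f t) (volume.restrict (Ioc 0 1)) :=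
    hf.bdd_mul hw'c.aestronglyMeasurable (Filter.Eventually.of_forall hbd)
  apply hint.congr
  refine (MeasureTheory.ae_restrict_iff' measurableSet_Ioc).mpr
    (Filter.Eventually.of_forall fun t ht => ?_)
  show w (proj t) * f t = h t
  rw [hh t ht, hproj_id t (Ioc_subset_Icc_self ht)]

lemma helper_confLen_le_of_pointwise {g₁ g₂ : X → ℝ} {Λ : ℝ} (hΛ : 0 ≤ Λ) {β : ℝ → X}
    (hcomp : ∀ t ∈ Icc (0:ℝ) 1, g₁ (β t) ≤ Λ * g₂ (β t))
    (hg₁ : ∀ t, 0 ≤ g₁ (β t))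
    (himp : IntegrableOn (fun t => g₁ (β t) * mSpeed (fun a b : X => dist a b) β t)
        (Ioc (0:ℝ) 1) →
      IntegrableOn (fun t => g₂ (β t) * mSpeed (fun a b : X => dist a b) β t) (Ioc (0:ℝ) 1)) :
    confLen g₁ β ≤ Λ * confLen g₂ β := by
  have he1 : confLen g₁ β
      = ∫ t in Ioc (0:ℝ) 1, g₁ (β t) * mSpeed (fun a b : X => dist a b) β t :=
    intervalIntegral.integral_of_le zero_le_one
  have he2 : confLen g₂ β
      = ∫ t in Ioc (0:ℝ) 1, g₂ (β t) * mSpeed (fun a b : X => dist a b) β t :=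
    intervalIntegral.integral_of_le zero_le_one
  rw [he1, he2]
  by_cases h2 : IntegrableOn
      (fun t => g₂ (β t) * mSpeed (fun a b : X => dist a b) β t) (Ioc (0:ℝ) 1)
  · rw [← MeasureTheory.integral_const_mul]
    apply MeasureTheory.integral_mono_of_nonneg
    · exact Filter.Eventually.of_forall fun t =>
        mul_nonneg (hg₁ t) (helper_mSpeed_nonneg β t)
    · exact h2.const_mul Λ
    · refine (MeasureTheory.ae_restrict_iff' measurableSet_Ioc).mpr
        (Filter.Eventually.of_forall fun t ht => ?_)
      have h3 := mul_le_mul_of_nonneg_right (hcomp t ⟨ht.1.le, ht.2⟩)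
        (helper_mSpeed_nonneg β t)
      calc g₁ (β t) * mSpeed (fun a b : X => dist a b) β t
          ≤ Λ * g₂ (β t) * mSpeed (fun a b : X => dist a b) β t := h3
        _ = Λ * (g₂ (β t) * mSpeed (fun a b : X => dist a b) β t) := by ring
  · have h1 : ¬ IntegrableOn
        (fun t => g₁ (β t) * mSpeed (fun a b : X => dist a b) β t) (Ioc (0:ℝ) 1) :=
      fun h => h2 (himp h)
    rw [MeasureTheory.integral_undef h1, MeasureTheory.integral_undef h2, mul_zero]

lemma helper_exit_bound (hlen : IsLengthMetric X)
    {K : Set X} (hKne : K.Nonempty) {δ m : ℝ} (hδ : 0 < δ) (hm : 0 < m)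
    {g : X → ℝ} (hg0 : ∀ z, 0 ≤ g z) (hgm : ∀ z ∈ Metric.cthickening δ K, m ≤ g z)
    {β : ℝ → X} (hAC : ACOn (fun a b : X => dist a b) β 0 1) (hβ0 : β 0 ∈ K)
    {t₁ : ℝ} (ht₁ : t₁ ∈ Icc (0:ℝ) 1) (hout : β t₁ ∉ Metric.cthickening δ K)
    (hint : IntegrableOn (fun t => g (β t) * mSpeed (fun a b : X => dist a b) β t)
      (Ioc (0:ℝ) 1)) :
    m * δ ≤ confLen g β := by
  have hβc : ContinuousOn β (Icc 0 1) := helper_acOn_continuousOn hAC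
  set φ : ℝ → ℝ := fun t => Metric.infDist (β t) K with hφdef
  have hφc : ContinuousOn φ (Icc 0 1) :=
    (Metric.continuous_infDist_pt K).comp_continuousOn hβc
  have hφ0 : φ 0 = 0 := Metric.infDist_zero_of_mem hβ0
  have hφt₁ : δ ≤ φ t₁ := by
    by_contra h
    push_neg at h
    exact hout ((helper_mem_cthickening_iff hKne hδ.le _).mpr h.le)
  set S : Set ℝ := Icc 0 t₁ ∩ φ ⁻¹' (Ici δ) with hSdef
  have hScl : IsClosed S :=
    (hφc.mono (Icc_subset_Icc le_rfl ht₁.2)).preimage_isClosed_of_isClosed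
      isClosed_Icc isClosed_Ici
  have hSne : S.Nonempty := ⟨t₁, ⟨ht₁.1, le_rfl⟩, hφt₁⟩
  have hSbdd : BddBelow S := ⟨0, fun t ht => ht.1.1⟩
  set c := sInf S with hcdef
  have hcS : c ∈ S := hScl.csInf_mem hSne hSbdd
  have hc01 : c ∈ Icc (0:ℝ) t₁ := hcS.1
  have hcδ : δ ≤ φ c := hcS.2
  have hcpos : 0 < c := by
    rcases hc01.1.lt_or_eq with h | h
    · exact h
    · exfalso
      rw [← h, hφ0] at hcδ
      linarith
  have hc1 : c ≤ 1 := le_trans hc01.2 ht₁.2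
  have hlt : ∀ t ∈ Ico (0:ℝ) c, φ t < δ := by
    intro t ht
    by_contra h
    push_neg at h
    have hmem : t ∈ S := ⟨⟨ht.1, le_trans ht.2.le hc01.2⟩, h⟩
    exact absurd (csInf_le hSbdd hmem) (not_le.mpr ht.2)
  have hconf : ∀ t ∈ Icc (0:ℝ) c, β t ∈ Metric.cthickening δ K := by
    intro t ht
    rw [helper_mem_cthickening_iff hKne hδ.le]
    rcases ht.2.lt_or_eq with h | h
    · exact (hlt t ⟨ht.1, h⟩).le
    · subst h
      haveI hne : (nhdsWithin c (Ico (0:ℝ) c)).NeBot := by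
        rw [← mem_closure_iff_nhdsWithin_neBot, closure_Ico hcpos.ne]
        exact ⟨hcpos.le, le_rfl⟩
      have hsub : Ico (0:ℝ) c ⊆ Icc (0:ℝ) 1 := fun u hu => ⟨hu.1, le_trans hu.2.le hc1⟩
      have htd : Tendsto φ (nhdsWithin c (Ico (0:ℝ) c)) (nhds (φ c)) :=
        (hφc c ⟨hcpos.le, hc1⟩).mono hsub
      exact le_of_tendsto htd
        (Filter.eventually_of_mem self_mem_nhdsWithin fun u hu => (hlt u hu).le)
  have hdist : δ ≤ dist (β 0) (β c) := by
    have h2 := Metric.infDist_le_dist_of_mem (x := β c) hβ0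
    rw [dist_comm]
    exact le_trans hcδ h2
  have hkey : dist (β 0) (β c) ≤ ∫ t in (0:ℝ)..c, mSpeed (fun a b : X => dist a b) β t :=
    helper_dist_le_integral_mSpeed hlen hAC hcpos hc1
  have hstep1 : m * δ ≤ ∫ t in Ioc (0:ℝ) c, m * mSpeed (fun a b : X => dist a b) β t := by
    have heq : (∫ t in Ioc (0:ℝ) c, m * mSpeed (fun a b : X => dist a b) β t)
        = m * ∫ t in (0:ℝ)..c, mSpeed (fun a b : X => dist a b) β t := by
      rw [← intervalIntegral.integral_of_le hcpos.le, intervalIntegral.integral_const_mul]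
    rw [heq]
    exact mul_le_mul_of_nonneg_left (le_trans hdist hkey) hm.le
  have hintc : IntegrableOn (fun t => g (β t) * mSpeed (fun a b : X => dist a b) β t)
      (Ioc 0 c) := hint.mono_set (Ioc_subset_Ioc le_rfl hc1)
  have hstep2 : (∫ t in Ioc (0:ℝ) c, m * mSpeed (fun a b : X => dist a b) β t)
      ≤ ∫ t in Ioc (0:ℝ) c, g (β t) * mSpeed (fun a b : X => dist a b) β t := by
    apply MeasureTheory.integral_mono_of_nonneg
    · exact Filter.Eventually.of_forall fun t =>
        mul_nonneg hm.le (helper_mSpeed_nonneg β t)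
    · exact hintc
    · refine (MeasureTheory.ae_restrict_iff' measurableSet_Ioc).mpr
        (Filter.Eventually.of_forall fun t ht => ?_)
      exact mul_le_mul_of_nonneg_right (hgm _ (hconf t ⟨ht.1.le, ht.2⟩))
        (helper_mSpeed_nonneg β t)
  have hstep3 : (∫ t in Ioc (0:ℝ) c, g (β t) * mSpeed (fun a b : X => dist a b) β t)
      ≤ ∫ t in Ioc (0:ℝ) 1, g (β t) * mSpeed (fun a b : X => dist a b) β t := by
    apply MeasureTheory.setIntegral_mono_set hint
    · exact Filter.Eventually.of_forall fun t =>
        mul_nonneg (hg0 _) (helper_mSpeed_nonneg β t)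
    · exact HasSubset.Subset.eventuallyLE (Ioc_subset_Ioc le_rfl hc1)
  have hfin : (∫ t in Ioc (0:ℝ) 1, g (β t) * mSpeed (fun a b : X => dist a b) β t)
      = confLen g β := (intervalIntegral.integral_of_le zero_le_one).symm
  linarith

end CondLHelpers

/-- **The conformal family satisfies the local log-Lipschitz condition (L)**
(Lemma 5.4). -/
theorem conformal_family_condL {X : Type*} [MetricSpace X] [LocallyCompactSpace X]
    (hlen : IsLengthMetric X)
    (I : Set ℝ) (hIopen : IsOpen I) (hIord : I.OrdConnected) (hIne : I.Nonempty)
    (ρ : ℝ → X → ℝ) (hρpos : ∀ s ∈ I, ∀ x : X, 0 < ρ s x) (hρlip : LocLipOn I ρ) :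
    CondL I (fun s => confMetric (ρ s)) := by
  intro J K hJI hJc hKc
  rcases K.eq_empty_or_nonempty with rfl | hKne
  · exact ⟨1, one_pos, 1, one_pos, fun s _ s' _ x hx => absurd hx (notMem_empty x)⟩
  rcases J.eq_empty_or_nonempty with rfl | hJne
  · exact ⟨1, one_pos, 1, one_pos, fun s hs => absurd hs (notMem_empty s)⟩
  classical
  obtain ⟨K', hK'c, hKK'⟩ := exists_compact_superset hKc
  obtain ⟨δ, hδ, hδK⟩ := hKc.exists_cthickening_subset_open isOpen_interior hKK'
  have hthick : Metric.cthickening δ K ⊆ K' := hδK.trans interior_subset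
  obtain ⟨C₀, hC₀⟩ := hρlip J K' hJI hJc hK'c
  set C₁ := |C₀| + 1 with hC₁def
  have hC₁ : 0 < C₁ := by positivity
  have hlip : ∀ s ∈ J, ∀ s' ∈ J, ∀ z ∈ K', |ρ s z - ρ s' z| ≤ C₁ * |s - s'| := by
    intro s hs s' hs' z hz
    have h := hC₀ s hs s' hs' z hz z hz
    simp only [dist_self, add_zero] at h
    calc |ρ s z - ρ s' z| ≤ C₀ * |s - s'| := h
      _ ≤ C₁ * |s - s'| := by
          apply mul_le_mul_of_nonneg_right _ (abs_nonneg _)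
          rw [hC₁def]
          linarith [le_abs_self C₀]
  have hK'ne : K'.Nonempty := hKne.mono (hKK'.trans interior_subset)
  have hcont : ContinuousOn (fun p : ℝ × X => ρ p.1 p.2) (J ×ˢ K') := by
    have hl : LipschitzOnWith (Real.toNNReal (2 * |C₀|))
        (fun p : ℝ × X => ρ p.1 p.2) (J ×ˢ K') := by
      apply LipschitzOnWith.of_dist_le'
      intro p hp q hq
      rw [Set.mem_prod] at hp hq
      have h := hC₀ p.1 hp.1 q.1 hq.1 p.2 hp.2 q.2 hq.2
      have h1 : dist p.1 q.1 ≤ dist p q := by rw [Prod.dist_eq]; exact le_max_left _ _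
      have h2 : dist p.2 q.2 ≤ dist p q := by rw [Prod.dist_eq]; exact le_max_right _ _
      rw [Real.dist_eq]
      calc |ρ p.1 p.2 - ρ q.1 q.2| ≤ C₀ * (|p.1 - q.1| + dist p.2 q.2) := h
        _ ≤ |C₀| * (dist p q + dist p q) := by
            apply le_trans (mul_le_mul_of_nonneg_right (le_abs_self C₀)
              (by positivity))
            apply mul_le_mul_of_nonneg_left _ (abs_nonneg C₀)
            have h3 : |p.1 - q.1| = dist p.1 q.1 := (Real.dist_eq _ _).symm
            rw [h3]
            exact add_le_add h1 h2
        _ = 2 * |C₀| * dist p q := by ring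
    exact hl.continuousOn
  obtain ⟨pm, hpm, hpmin⟩ := (hJc.prod hK'c).exists_isMinOn (hJne.prod hK'ne) hcont
  obtain ⟨pM, hpM, hpmax⟩ := (hJc.prod hK'c).exists_isMaxOn (hJne.prod hK'ne) hcont
  set m := ρ pm.1 pm.2 with hmdef
  set M := ρ pM.1 pM.2 with hMdef
  rw [Set.mem_prod] at hpm hpM
  have hm : 0 < m := hρpos pm.1 (hJI hpm.1) pm.2
  have hρm : ∀ s ∈ J, ∀ z ∈ K', m ≤ ρ s z := fun s hs z hz =>
    isMinOn_iff.mp hpmin (s, z) (Set.mem_prod.mpr ⟨hs, hz⟩)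
  have hρM : ∀ s ∈ J, ∀ z ∈ K', ρ s z ≤ M := fun s hs z hz =>
    isMaxOn_iff.mp hpmax (s, z) (Set.mem_prod.mpr ⟨hs, hz⟩)
  have hmM : m ≤ M := hρM pm.1 hpm.1 pm.2 hpm.2
  have hM : 0 < M := lt_of_lt_of_le hm hmM
  set A := M / m with hAdef
  have hA1 : 1 ≤ A := (one_le_div hm).mpr hmM
  have hA : 0 < A := lt_of_lt_of_le one_pos hA1
  set C := C₁ / m with hCdef
  have hC : 0 < C := div_pos hC₁ hm
  set r := m * δ / (2 * A) with hrdef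
  have hr : 0 < r := by positivity
  refine ⟨C, hC, r, hr, ?_⟩
  intro s hs s' hs' x hx y hy hxy hinf
  show |Real.log (confMetric (ρ s) x y / confMetric (ρ s') x y)| ≤ C * |s - s'|
  have hρc : ∀ u ∈ I, ∀ β : ℝ → X, ContinuousOn β (Icc 0 1) →
      ContinuousOn (fun t => ρ u (β t)) (Icc (0:ℝ) 1) := by
    intro u hu β hβ
    obtain ⟨C₂, hC₂⟩ := hρlip {u} (β '' Icc 0 1) (singleton_subset_iff.mpr hu)
      isCompact_singleton (isCompact_Icc.image_of_continuousOn hβ)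
    have hl : LipschitzOnWith (Real.toNNReal C₂) (ρ u) (β '' Icc 0 1) := by
      apply LipschitzOnWith.of_dist_le'
      intro z hz w hw
      have h := hC₂ u rfl u rfl z hz w hw
      simp only [sub_self, abs_zero, zero_add] at h
      rw [Real.dist_eq]
      exact h
    exact hl.continuousOn.comp hβ (mapsTo_image β _)
  have htrans : ∀ u ∈ I, ∀ u' ∈ I, ∀ β : ℝ → X, ContinuousOn β (Icc 0 1) →
      IntegrableOn (fun t => ρ u (β t) * mSpeed (fun a b : X => dist a b) β t)
        (Ioc (0:ℝ) 1) →
      IntegrableOn (fun t => ρ u' (β t) * mSpeed (fun a b : X => dist a b) β t)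
        (Ioc (0:ℝ) 1) := by
    intro u hu u' hu' β hβ hint
    apply helper_integrableOn_mul_of_bdd (w := fun t => ρ u' (β t) / ρ u (β t))
      ?_ hint ?_
    · exact ((hρc u' hu' β hβ).div (hρc u hu β hβ)
        (fun t ht => (hρpos u hu (β t)).ne'))
    · intro t ht
      have hne := (hρpos u hu (β t)).ne'
      field_simp
  have hρ0 : ∀ u ∈ I, ∀ z, 0 ≤ ρ u z := fun u hu z => (hρpos u hu z).le
  have hd0 : ∀ u ∈ I, 0 ≤ confMetric (ρ u) x y := fun u hu =>
    helper_confMetric_nonneg (hρ0 u hu) x y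
  by_cases hall : ∀ u ∈ J, confMetric (ρ u) x y = 0
  · rw [hall s hs, hall s' hs', zero_div, Real.log_zero, abs_zero]
    exact mul_nonneg hC.le (abs_nonneg _)
  push_neg at hall
  obtain ⟨u₁, hu₁J, hu₁⟩ := hall
  have hd₁pos : 0 < confMetric (ρ u₁) x y := (hd0 u₁ (hJI hu₁J)).lt_of_ne (Ne.symm hu₁)
  have hcurve : ∃ β : ℝ → X, ACOn (fun a b : X => dist a b) β 0 1 ∧ β 0 = x ∧ β 1 = y := by
    by_contra h
    push_neg at h
    apply hu₁
    have hempty : {l | ∃ β : ℝ → X, ACOn (fun a b : X => dist a b) β 0 1 ∧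
        β 0 = x ∧ β 1 = y ∧ l = confLen (ρ u₁) β} = (∅ : Set ℝ) := by
      rw [eq_empty_iff_forall_notMem]
      rintro l ⟨β, h1, h2, h3, _⟩
      exact h β h1 h2 h3
    show sInf {l | ∃ β : ℝ → X, ACOn (fun a b : X => dist a b) β 0 1 ∧
        β 0 = x ∧ β 1 = y ∧ l = confLen (ρ u₁) β} = 0
    rw [hempty, Real.sInf_empty]
  have hint_all : ∀ β : ℝ → X, ACOn (fun a b : X => dist a b) β 0 1 → β 0 = x → β 1 = y →
      ∀ u ∈ I, IntegrableOn (fun t => ρ u (β t) * mSpeed (fun a b : X => dist a b) β t)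
        (Ioc (0:ℝ) 1) := by
    intro β hAC hβ0 hβ1 u hu
    by_contra h
    have hβc := helper_acOn_continuousOn hAC
    have h₁ : ¬ IntegrableOn
        (fun t => ρ u₁ (β t) * mSpeed (fun a b : X => dist a b) β t) (Ioc (0:ℝ) 1) :=
      fun hi => h (htrans u₁ (hJI hu₁J) u hu β hβc hi)
    have hzero : confLen (ρ u₁) β = 0 := by
      have he : confLen (ρ u₁) β
          = ∫ t in Ioc (0:ℝ) 1, ρ u₁ (β t) * mSpeed (fun a b : X => dist a b) β t :=
        intervalIntegral.integral_of_le zero_le_one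
      rw [he]
      exact MeasureTheory.integral_undef h₁
    have hle : confMetric (ρ u₁) x y ≤ 0 := by
      have h2 := helper_confMetric_le_confLen (hρ0 u₁ (hJI hu₁J)) hAC hβ0 hβ1
      rw [hzero] at h2
      exact h2
    exact absurd hle (not_le.mpr hd₁pos)
  have hcomp_main : ∀ u ∈ J, ∀ u' ∈ J, ∀ Λ : ℝ, 1 ≤ Λ → (∀ z ∈ K', ρ u z ≤ Λ * ρ u' z) →
      confMetric (ρ u') x y < m * δ / 2 →
      confMetric (ρ u) x y ≤ Λ * confMetric (ρ u') x y := by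
    intro u hu u' hu' Λ hΛ1 hpt hlt
    have hΛ0 : 0 < Λ := lt_of_lt_of_le one_pos hΛ1
    have key : ∀ ε : ℝ, 0 < ε → confMetric (ρ u') x y + ε < m * δ →
        confMetric (ρ u) x y ≤ Λ * (confMetric (ρ u') x y + ε) := by
      intro ε hε hsmall
      obtain ⟨β, hAC, hβ0, hβ1, hβlt⟩ := helper_exists_lt hcurve (lt_add_of_pos_right _ hε)
      have hβint := hint_all β hAC hβ0 hβ1
      have hconf : ∀ t ∈ Icc (0:ℝ) 1, β t ∈ Metric.cthickening δ K := by
        by_contra h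
        push_neg at h
        obtain ⟨t₁, ht₁, hout⟩ := h
        have hbig := helper_exit_bound hlen hKne hδ hm (hρ0 u' (hJI hu'))
          (fun z hz => hρm u' hu' z (hthick hz)) hAC (by rw [hβ0]; exact hx) ht₁ hout
          (hβint u' (hJI hu'))
        linarith
      have hcomp := helper_confLen_le_of_pointwise hΛ0.le
        (fun t ht => hpt (β t) (hthick (hconf t ht)))
        (fun t => hρ0 u (hJI hu) (β t))
        (fun hi => htrans u (hJI hu) u' (hJI hu') β (helper_acOn_continuousOn hAC) hi)
      have hle : confMetric (ρ u) x y ≤ Λ * confLen (ρ u') β :=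
        le_trans (helper_confMetric_le_confLen (hρ0 u (hJI hu)) hAC hβ0 hβ1) hcomp
      calc confMetric (ρ u) x y ≤ Λ * confLen (ρ u') β := hle
        _ ≤ Λ * (confMetric (ρ u') x y + ε) := mul_le_mul_of_nonneg_left hβlt.le hΛ0.le
    by_contra hcon
    push_neg at hcon
    have hd'0 : 0 ≤ confMetric (ρ u') x y := hd0 u' (hJI hu')
    set d' := confMetric (ρ u') x y with hd'def
    set d := confMetric (ρ u) x y with hddef
    set ε := min ((m * δ - d') / 2) ((d - Λ * d') / (2 * Λ)) with hεdef
    have hε : 0 < ε := lt_min (by linarith) (div_pos (by linarith) (by linarith))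
    have h1 : d' + ε < m * δ := by
      have h2 := min_le_left ((m * δ - d') / 2) ((d - Λ * d') / (2 * Λ))
      have h3 : ε ≤ (m * δ - d') / 2 := h2
      linarith
    have h2 := key ε hε h1
    have h3 : ε ≤ (d - Λ * d') / (2 * Λ) := min_le_right _ _
    have h4 : Λ * ((d - Λ * d') / (2 * Λ)) = (d - Λ * d') / 2 := by
      field_simp
    have h5 : Λ * ε ≤ (d - Λ * d') / 2 := by
      calc Λ * ε ≤ Λ * ((d - Λ * d') / (2 * Λ)) := mul_le_mul_of_nonneg_left h3 hΛ0.le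
        _ = (d - Λ * d') / 2 := h4
    have h6 : Λ * (d' + ε) = Λ * d' + Λ * ε := by ring
    linarith
  have himg : Set.Nonempty ((fun u => confMetric (ρ u) x y) '' J) := hJne.image _
  obtain ⟨l₀, hl₀mem, hl₀⟩ := exists_lt_of_csInf_lt himg hinf
  obtain ⟨u₀, hu₀J, rfl⟩ := hl₀mem
  have hd₀ : confMetric (ρ u₀) x y < r := hl₀
  have hAcomp : ∀ v ∈ J, ∀ z ∈ K', ρ v z ≤ A * ρ u₀ z := by
    intro v hv z hz
    calc ρ v z ≤ M := hρM v hv z hz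
      _ = A * m := by rw [hAdef]; field_simp
      _ ≤ A * ρ u₀ z := mul_le_mul_of_nonneg_left (hρm u₀ hu₀J z hz) hA.le
  have hrle : r ≤ m * δ / 2 := by
    rw [hrdef, div_le_div_iff₀ (by positivity : (0:ℝ) < 2 * A) (by norm_num : (0:ℝ) < 2)]
    nlinarith [mul_nonneg (mul_nonneg hm.le hδ.le) (sub_nonneg.mpr hA1)]
  have hru₀ : confMetric (ρ u₀) x y < m * δ / 2 := lt_of_lt_of_le hd₀ hrle
  have hAr : A * r = m * δ / 2 := by
    rw [hrdef]
    field_simp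
  have hs'le : confMetric (ρ s') x y ≤ A * confMetric (ρ u₀) x y :=
    hcomp_main s' hs' u₀ hu₀J A hA1 (hAcomp s' hs') hru₀
  have hsle0 : confMetric (ρ s) x y ≤ A * confMetric (ρ u₀) x y :=
    hcomp_main s hs u₀ hu₀J A hA1 (hAcomp s hs) hru₀
  have hs'small : confMetric (ρ s') x y < m * δ / 2 := by
    have h2 : A * confMetric (ρ u₀) x y < A * r := mul_lt_mul_of_pos_left hd₀ hA
    rw [hAr] at h2
    linarith
  have hssmall : confMetric (ρ s) x y < m * δ / 2 := by
    have h2 : A * confMetric (ρ u₀) x y < A * r := mul_lt_mul_of_pos_left hd₀ hA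
    rw [hAr] at h2
    linarith
  set lam := Real.exp (C * |s - s'|) with hlamdef
  have hlam1 : 1 ≤ lam := Real.one_le_exp (by positivity)
  have hCm : C * m = C₁ := by rw [hCdef]; field_simp
  have hptgen : ∀ v ∈ J, ∀ v' ∈ J, |v - v'| = |s - s'| → ∀ z ∈ K', ρ v z ≤ lam * ρ v' z := by
    intro v hv v' hv' habs z hz
    have h1 := hlip v hv v' hv' z hz
    rw [habs] at h1
    have h2 : ρ v z ≤ ρ v' z + C₁ * |s - s'| := by
      have h3 := abs_sub_le_iff.mp h1
      linarith [h3.1]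
    have hρ := hρm v' hv' z hz
    have h3 : C₁ * |s - s'| ≤ (C * |s - s'|) * ρ v' z := by
      calc C₁ * |s - s'| = (C * |s - s'|) * m := by rw [← hCm]; ring
        _ ≤ (C * |s - s'|) * ρ v' z := by
            apply mul_le_mul_of_nonneg_left hρ
            positivity
    have h4 : 1 + C * |s - s'| ≤ lam := by
      rw [hlamdef]
      linarith [Real.add_one_le_exp (C * |s - s'|)]
    have hρpos' : 0 ≤ ρ v' z := hρ0 v' (hJI hv') z
    calc ρ v z ≤ (1 + C * |s - s'|) * ρ v' z := by nlinarith
      _ ≤ lam * ρ v' z := mul_le_mul_of_nonneg_right h4 hρpos'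
  have hds : confMetric (ρ s) x y ≤ lam * confMetric (ρ s') x y :=
    hcomp_main s hs s' hs' lam hlam1 (hptgen s hs s' hs' rfl) hs'small
  have hds' : confMetric (ρ s') x y ≤ lam * confMetric (ρ s) x y :=
    hcomp_main s' hs' s hs lam hlam1 (hptgen s' hs' s hs (abs_sub_comm s' s)) hssmall
  by_cases hz : confMetric (ρ s') x y = 0
  · have hzs : confMetric (ρ s) x y = 0 := by
      rw [hz, mul_zero] at hds
      exact le_antisymm hds (hd0 s (hJI hs))
    rw [hzs, zero_div, Real.log_zero, abs_zero]
    exact mul_nonneg hC.le (abs_nonneg _)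
  · have hpos' : 0 < confMetric (ρ s') x y := (hd0 s' (hJI hs')).lt_of_ne (Ne.symm hz)
    have hposs : 0 < confMetric (ρ s) x y := by
      rcases (hd0 s (hJI hs)).lt_or_eq with h | h
      · exact h
      · rw [← h, mul_zero] at hds'
        exact absurd (le_antisymm hds' hpos'.le) hz
    have hlamne : lam ≠ 0 := ne_of_gt (lt_of_lt_of_le one_pos hlam1)
    have hlog_lam : Real.log lam = C * |s - s'| := Real.log_exp _
    rw [abs_le]
    constructor
    · rw [Real.log_div hposs.ne' hpos'.ne']
      have h2 := Real.log_le_log hpos' hds'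
      rw [Real.log_mul hlamne hposs.ne', hlog_lam] at h2
      linarith
    · rw [Real.log_div hposs.ne' hpos'.ne']
      have h2 := Real.log_le_log hposs hds
      rw [Real.log_mul hlamne hpos'.ne', hlog_lam] at h2
      linarith

end
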